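/- Let n ≥ 1 and a, b ≥ 1. Then the set of K^{a,b}_{n+1}-parking functions equals the set of x-parking functions for x = (a, b, b, …, b) ∈ ℕ^n. -/

import Mathlib

/-!
A set `U` of nonroot vertices of `K^{a,b}_{n+1}` has outdegree `a + b (n - |U|)` at each of its
vertices, so `α` is a `K^{a,b}_{n+1}`-parking function iff every nonempty set `T` of cars has a
car with `α i < a + b (n - |T|)`. The `x`-parking condition says that, for `j < n`, at least
`j + 1` cars lie below the threshold `c j = x_1 + ⋯ + x_{j+1}`, here `a + b j`. For any monotone
threshold `c` the two conditions agree: taking `T` to be the cars at or above `c j` converts one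
into the other.
-/

/-- `deg^G_U(i) = ∑_{j ∉ U} ω(i,j)`. -/
def degOut {n : ℕ} (ω : Fin (n + 1) → Fin (n + 1) → ℕ) (U : Finset (Fin (n + 1)))
    (i : Fin (n + 1)) : ℕ :=
  ∑ j ∈ Uᶜ, ω i j

/-- `α` is a `G`-parking function (the nonroot vertex `i+1` carries value `α i`). -/
def IsGPF (n : ℕ) (ω : Fin (n + 1) → Fin (n + 1) → ℕ) (α : Fin n → ℕ) : Prop :=
  ∀ U : Finset (Fin (n + 1)), U.Nonempty → (0 : Fin (n + 1)) ∉ U →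
    ∃ i : Fin n, i.succ ∈ U ∧ α i + 1 ≤ degOut ω U i.succ

/-- `α` is an `x`-parking function of length `n` (`x` given 0-based: `x k` is `x_{k+1}`). -/
def IsVPF (n : ℕ) (x : ℕ → ℕ) (α : Fin n → ℕ) : Prop :=
  ∀ j : Fin n, (j : ℕ) + 1 ≤
    (Finset.univ.filter fun i => α i < ∑ k ∈ Finset.range ((j : ℕ) + 1), x k).card

/-- The edge-weight function of `K^{a,b}_{n+1}`: weight `a` on edges at `0`, weight `b`
elsewhere. -/
def omegaK (n a b : ℕ) : Fin (n + 1) → Fin (n + 1) → ℕ :=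
  fun i j => if i = j then 0 else if i = 0 ∨ j = 0 then a else b

open Finset

theorem forall_exists_lt_iff_forall_le_card_filter {ι : Type*} [Fintype ι] [DecidableEq ι]
    (α : ι → ℕ) {c : ℕ → ℕ} (hc : Monotone c) :
    (∀ T : Finset ι, T.Nonempty → ∃ i ∈ T, α i < c (Fintype.card ι - #T)) ↔
      ∀ j < Fintype.card ι, j + 1 ≤ #{i | α i < c j} := by
  constructor
  · intro h j hj
    by_contra! hsmall
    have hcard : #{i | α i < c j} + #{i | ¬α i < c j} = Fintype.card ι :=
      card_filter_add_card_filter_not _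
    obtain ⟨i, hiT, hi⟩ := h {i | ¬α i < c j} (card_pos.1 (by omega))
    exact (mem_filter.1 hiT).2 (hi.trans_le (hc (by omega)))
  · intro h T hT
    have hlt : Fintype.card ι - #T < Fintype.card ι := by
      have := hT.card_pos; have := card_le_univ T; omega
    by_contra! hT_high
    have hsub : ({i | α i < c (Fintype.card ι - #T)} : Finset ι) ⊆ Tᶜ := fun i hi =>
      mem_compl.2 fun hiT => (hT_high i hiT).not_gt (mem_filter.1 hi).2
    have := (h _ hlt).trans (card_le_card hsub)
    rw [card_compl] at this
    omega

theorem isVPF_iff_forall_exists_lt (n : ℕ) (x : ℕ → ℕ) (α : Fin n → ℕ) :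
    IsVPF n x α ↔
      ∀ T : Finset (Fin n), T.Nonempty → ∃ i ∈ T, α i < ∑ k ∈ range (n - #T + 1), x k := by
  have hmono : Monotone fun j => ∑ k ∈ range (j + 1), x k := fun _ _ hj =>
    sum_le_sum_of_subset (range_subset_range.2 (by omega))
  simpa [IsVPF, Fin.forall_iff] using
    (forall_exists_lt_iff_forall_le_card_filter α hmono).symm

theorem isGPF_iff_forall_map_succ (n : ℕ) (ω : Fin (n + 1) → Fin (n + 1) → ℕ) (α : Fin n → ℕ) :
    IsGPF n ω α ↔ ∀ T : Finset (Fin n), T.Nonempty →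
      ∃ i ∈ T, α i + 1 ≤ degOut ω (T.map (Fin.succEmb n)) i.succ := by
  constructor
  · intro h T hT
    obtain ⟨i, hi, hdeg⟩ := h (T.map (Fin.succEmb n)) hT.map (by simp [Fin.succ_ne_zero])
    exact ⟨i, by simpa using hi, hdeg⟩
  · intro h U hU hU0
    have hU_sub : U ⊆ univ.map (Fin.succEmb n) := by
      rw [← Fin.Ioi_zero_eq_map]
      exact fun u hu => mem_Ioi.2 (Fin.pos_iff_ne_zero.2 fun hu0 => hU0 (hu0 ▸ hu))
    obtain ⟨T, -, rfl⟩ := subset_map_iff.1 hU_sub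
    obtain ⟨i, hi, hdeg⟩ := h T (by simpa using hU)
    exact ⟨i, by simpa using hi, hdeg⟩

theorem degOut_omegaK_map_succ (n a b : ℕ) (T : Finset (Fin n)) {i : Fin n} (hi : i ∈ T) :
    degOut (omegaK n a b) (T.map (Fin.succEmb n)) i.succ = a + b * (n - #T) := by
  set U := T.map (Fin.succEmb n)
  have h0 : (0 : Fin (n + 1)) ∈ Uᶜ := by simp [U, Fin.succ_ne_zero]
  have hiU : i.succ ∈ U := by simpa [U] using hi
  have hweight : ∀ j ∈ Uᶜ.erase 0, omegaK n a b i.succ j = b := by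
    intro j hj
    have hij : i.succ ≠ j := by rintro rfl; exact mem_compl.1 (mem_of_mem_erase hj) hiU
    simp [omegaK, hij, ne_of_mem_erase hj, Fin.succ_ne_zero]
  have hcard : #(Uᶜ.erase 0) = n - #T := by
    rw [card_erase_of_mem h0, card_compl, card_map, Fintype.card_fin]
    omega
  rw [degOut, ← insert_erase h0, sum_insert (notMem_erase _ _), sum_congr rfl hweight,
    sum_const, hcard, smul_eq_mul, mul_comm]
  simp [omegaK, Fin.succ_ne_zero]

theorem sum_range_succ_ite_zero (a b j : ℕ) :
    ∑ k ∈ range (j + 1), (if k = 0 then a else b) = a + b * j := by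
  rw [sum_range_succ']
  simp [mul_comm, add_comm]

theorem stmt9_general (n : ℕ) (a b : ℕ) :
    {α : Fin n → ℕ | IsGPF n (omegaK n a b) α} =
      {α : Fin n → ℕ | IsVPF n (fun k => if k = 0 then a else b) α} := by
  ext α
  simp only [Set.mem_ofPred_eq, isGPF_iff_forall_map_succ, isVPF_iff_forall_exists_lt,
    sum_range_succ_ite_zero, Nat.add_one_le_iff]
  refine forall₂_congr fun T _ => exists_congr fun i => and_congr_right fun hi => ?_
  rw [degOut_omegaK_map_succ n a b T hi]

/-- The `K^{a,b}_{n+1}`-parking functions are exactly the `(a,b,b,…,b)`-parking functions. -/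
theorem stmt9 (n : ℕ) (hn : 1 ≤ n) (a b : ℕ) (ha : 1 ≤ a) (hb : 1 ≤ b) :
    {α : Fin n → ℕ | IsGPF n (omegaK n a b) α} =
      {α : Fin n → ℕ | IsVPF n (fun k => if k = 0 then a else b) α} :=
  stmt9_general n a b
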